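/- arXiv:1704.04399 — 11 statements merged into one kernel-verified Lean document; each statement's English description precedes it below -/
import Mathlib

section
/- Let α be an ordinal and consider the graph G(α,132) whose vertices are pairs (x,y) of elements of α with x < y, with an edge between (x,y) and (y,z) whenever x < y < z. If {(a₁,a₂),(b₁,b₂)} is a pair of distinct vertices having at least two common neighbours, then a₁ = b₁ or a₂ = b₂. -/
/-- Vertices: pairs of ordinals `(x, y)` with `x < y < o`. -/
abbrev OV (o : Ordinal) := {p : Ordinal × Ordinal // p.1 < p.2 ∧ p.2 < o}

/-- The shift graph `G(o, 132)` on an ordinal `o`. -/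
def OG132 (o : Ordinal) : SimpleGraph (OV o) where
  Adj a b := a.val.2 = b.val.1 ∨ b.val.2 = a.val.1
  symm := ⟨fun a b h => Or.symm h⟩
  loopless := ⟨fun a h => by rcases h with h | h <;> exact a.prop.1.ne' h⟩

/-!
A common neighbour `c` of `a` and `b` has `c.1 = a.2` or `c.2 = a.1`, and likewise for `b`.
If `a` and `b` share no coordinate, the only mixed possibilities are `c = (a.2, b.1)` and
`c = (b.2, a.1)`. Two distinct common neighbours would realise both, which forces the
impossible cycle `a.1 < a.2 < b.1 < b.2 < a.1`.
-/

namespace OG132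

variable {o : Ordinal}

theorem val_eq_of_adj_of_adj {a b c : OV o} (h₁ : a.val.1 ≠ b.val.1) (h₂ : a.val.2 ≠ b.val.2)
    (hac : (OG132 o).Adj a c) (hbc : (OG132 o).Adj b c) :
    c.val = (a.val.2, b.val.1) ∨ c.val = (b.val.2, a.val.1) := by
  rcases hac with hac | hac <;> rcases hbc with hbc | hbc
  · exact absurd (hac.trans hbc.symm) h₂
  · exact .inl (Prod.ext hac.symm hbc)
  · exact .inr (Prod.ext hbc.symm hac)
  · exact absurd (hac.symm.trans hbc) h₁

theorem false_of_val_eq_of_val_eq {a b c d : OV o} (hc : c.val = (a.val.2, b.val.1))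
    (hd : d.val = (b.val.2, a.val.1)) : False := by
  have hab : a.val.2 < b.val.1 := by simpa [hc] using c.prop.1
  have hba : b.val.2 < a.val.1 := by simpa [hd] using d.prop.1
  exact lt_irrefl _ (a.prop.1.trans (hab.trans (b.prop.1.trans hba)))

end OG132

theorem stmt_1_general (α : Ordinal) (a b : OV α)
    (h : ∃ c d : OV α, c ≠ d ∧
      (OG132 α).Adj a c ∧ (OG132 α).Adj b c ∧ (OG132 α).Adj a d ∧ (OG132 α).Adj b d) :
    a.val.1 = b.val.1 ∨ a.val.2 = b.val.2 := by
  obtain ⟨c, d, hcd, hac, hbc, had, hbd⟩ := h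
  by_contra! ⟨h₁, h₂⟩
  rcases OG132.val_eq_of_adj_of_adj h₁ h₂ hac hbc with hc | hc <;>
    rcases OG132.val_eq_of_adj_of_adj h₁ h₂ had hbd with hd | hd
  · exact hcd (Subtype.ext (hc.trans hd.symm))
  · exact OG132.false_of_val_eq_of_val_eq hc hd
  · exact OG132.false_of_val_eq_of_val_eq hd hc
  · exact hcd (Subtype.ext (hc.trans hd.symm))

/-- Two distinct vertices of `G(α,132)` with at least two common neighbours agree in
their first or their second coordinate. -/
theorem stmt_1 (α : Ordinal) (a b : OV α) (hab : a ≠ b)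
    (h : ∃ c d : OV α, c ≠ d ∧
      (OG132 α).Adj a c ∧ (OG132 α).Adj b c ∧ (OG132 α).Adj a d ∧ (OG132 α).Adj b d) :
    a.val.1 = b.val.1 ∨ a.val.2 = b.val.2 :=
  stmt_1_general α a b h
end

section
/- Let α be an ordinal and let S be a set of at least two distinct vertices of G(α,132) that pairwise share at least two common neighbours. Then either all vertices of S have the same first coordinate, or all vertices of S have the same second coordinate. -/
lemma pair132 {α : Ordinal} {u v c d : OV α} (hcd : c ≠ d)
    (h1 : (OG132 α).Adj u c) (h2 : (OG132 α).Adj v c)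
    (h3 : (OG132 α).Adj u d) (h4 : (OG132 α).Adj v d) :
    u.val.1 = v.val.1 ∨ u.val.2 = v.val.2 := by
  have hu := u.prop.1; have hv := v.prop.1; have hc := c.prop.1; have hd := d.prop.1
  rcases h1 with h1 | h1 <;> rcases h2 with h2 | h2 <;>
    rcases h3 with h3 | h3 <;> rcases h4 with h4 | h4 <;>
  first
    | exact Or.inr (h1.trans h2.symm)
    | exact Or.inl (h1.symm.trans h2)
    | exact Or.inr (h3.trans h4.symm)
    | exact Or.inl (h3.symm.trans h4)
    | exact absurd (Subtype.ext (Prod.ext (h1.symm.trans h3) (h2.trans h4.symm))) hcd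
    | exact absurd (Subtype.ext (Prod.ext (h2.symm.trans h4) (h1.trans h3.symm))) hcd
    | exact absurd (((((((hu.trans_eq h1).trans hc).trans_eq h2).trans hv).trans_eq h4).trans hd).trans_eq h3) (lt_irrefl _)
    | exact absurd (((((((hu.trans_eq h3).trans hd).trans_eq h4).trans hv).trans_eq h2).trans hc).trans_eq h1) (lt_irrefl _)

/-- If a set of at least two vertices of `G(α,132)` pairwise shares at least two common
neighbours, then all its vertices have the same first coordinate or all have the same
second coordinate. -/
theorem stmt_2 (α : Ordinal) (S : Set (OV α))
    (hS : ∃ u ∈ S, ∃ v ∈ S, u ≠ v)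
    (h : ∀ u ∈ S, ∀ v ∈ S, u ≠ v → ∃ c d : OV α, c ≠ d ∧
      (OG132 α).Adj u c ∧ (OG132 α).Adj v c ∧ (OG132 α).Adj u d ∧ (OG132 α).Adj v d) :
    (∀ u ∈ S, ∀ v ∈ S, u.val.1 = v.val.1) ∨ (∀ u ∈ S, ∀ v ∈ S, u.val.2 = v.val.2) := by
  have key : ∀ u ∈ S, ∀ v ∈ S, u.val.1 = v.val.1 ∨ u.val.2 = v.val.2 := by
    intro u hu v hv
    by_cases huv : u = v
    · exact Or.inl (by rw [huv])
    · obtain ⟨c, d, hcd, h1, h2, h3, h4⟩ := h u hu v hv huv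
      exact pair132 hcd h1 h2 h3 h4
  by_cases hall : ∀ u ∈ S, ∀ v ∈ S, u.val.1 = v.val.1
  · exact Or.inl hall
  · right
    push_neg at hall
    obtain ⟨a, ha, b, hb, hab⟩ := hall
    have hab2 : a.val.2 = b.val.2 := (key a ha b hb).resolve_left hab
    have hall2 : ∀ w ∈ S, w.val.2 = a.val.2 := by
      intro w hw
      rcases key w hw a ha with h1 | h1
      · rcases key w hw b hb with h2 | h2
        · exact absurd (h1.symm.trans h2) hab
        · exact h2.trans hab2.symm
      · exact h1
    intro u hu v hv
    exact (hall2 u hu).trans (hall2 v hv).symm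
end

section
/- G(ω,132) and G(ω+ω,132) are not isomorphic as graphs. -/
open Ordinal

namespace SimpleGraph

variable {V W : Type*} {G : SimpleGraph V} {H : SimpleGraph W}

def HasRichSquare (G : SimpleGraph V) : Prop :=
  ∃ a b c d : V, a ≠ b ∧ c ≠ d ∧ c ∈ G.commonNeighbors a b ∧ d ∈ G.commonNeighbors a b ∧
    (G.commonNeighbors a b).Infinite ∧ (G.commonNeighbors c d).Infinite

theorem Hom.mapsTo_commonNeighbors (f : G →g H) (a b : V) :
    Set.MapsTo f (G.commonNeighbors a b) (H.commonNeighbors (f a) (f b)) :=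
  fun _ hc => ⟨f.map_adj hc.1, f.map_adj hc.2⟩

theorem Embedding.infinite_commonNeighbors (f : G ↪g H) {a b : V}
    (h : (G.commonNeighbors a b).Infinite) : (H.commonNeighbors (f a) (f b)).Infinite :=
  Set.infinite_of_injOn_mapsTo f.injective.injOn (f.toHom.mapsTo_commonNeighbors a b) h

theorem HasRichSquare.map (f : G ↪g H) (h : G.HasRichSquare) : H.HasRichSquare := by
  obtain ⟨a, b, c, d, hab, hcd, hc, hd, hab_inf, hcd_inf⟩ := h
  exact ⟨f a, f b, f c, f d, f.injective.ne hab, f.injective.ne hcd,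
    f.toHom.mapsTo_commonNeighbors a b hc, f.toHom.mapsTo_commonNeighbors a b hd,
    f.infinite_commonNeighbors hab_inf, f.infinite_commonNeighbors hcd_inf⟩

end SimpleGraph

theorem Ordinal.finite_Iio_of_lt_omega0 {n : Ordinal} (hn : n < ω) : (Set.Iio n).Finite := by
  rw [← Cardinal.lt_aleph0_iff_set_finite, Cardinal.mk_Iio_ordinal, Cardinal.lift_lt_aleph0,
    card_lt_aleph0]
  exact hn

theorem Ordinal.infinite_Ioo_add_omega0 (x : Ordinal) : (Set.Ioo x (x + ω)).Infinite := by
  refine Set.infinite_of_injective_forall_mem (f := fun n : ℕ => x + (n + 1 : ℕ)) ?_ ?_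
  · intro m n h
    simpa using h
  · intro n
    exact ⟨by simp, by simpa using natCast_lt_omega0 (n + 1)⟩

namespace OG132

variable {o : Ordinal}

theorem finite_setOf_snd_lt {n : Ordinal} (hn : n < ω) : {c : OV o | c.val.2 < n}.Finite := by
  have hIio := finite_Iio_of_lt_omega0 hn
  refine Set.Finite.of_finite_image ((hIio.prod hIio).subset ?_) Subtype.val_injective.injOn
  rintro _ ⟨c, hc, rfl⟩
  exact ⟨c.prop.1.trans hc, hc⟩

theorem infinite_commonNeighbors_of_fst_eq {a b : OV o} (h : a.val.1 = b.val.1)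
    (hinf : (Set.Iio a.val.1).Infinite) : ((OG132 o).commonNeighbors a b).Infinite := by
  refine (hinf.mono ?_).of_image fun c : OV o => c.val.1
  intro x hx
  exact ⟨⟨(x, a.val.1), hx, a.prop.1.trans a.prop.2⟩, ⟨Or.inr rfl, Or.inr h⟩, rfl⟩

theorem infinite_commonNeighbors_of_snd_eq {a b : OV o} (h : a.val.2 = b.val.2)
    (hinf : (Set.Ioo a.val.2 o).Infinite) : ((OG132 o).commonNeighbors a b).Infinite := by
  refine (hinf.mono ?_).of_image fun c : OV o => c.val.2
  intro z hz
  exact ⟨⟨(a.val.2, z), hz⟩, ⟨Or.inl rfl, Or.inl h.symm⟩, rfl⟩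

theorem fst_eq_of_mem_commonNeighbors {a b c : OV o} (hab : a ≠ b) (h : a.val.2 = b.val.2)
    (hc : c ∈ (OG132 o).commonNeighbors a b) : c.val.1 = a.val.2 := by
  obtain ⟨hac | hca, hbc | hcb⟩ := hc
  · exact hac.symm
  · exact hac.symm
  · exact (h.trans hbc).symm
  · exact absurd (Subtype.ext (Prod.ext (hca.symm.trans hcb) h)) hab

/-- Below `ω` a vertex has only finitely many neighbours on its left, so infinitely many common
neighbours can only come from the right. -/
theorem snd_eq_of_infinite_commonNeighbors {a b : OV ω}
    (h : ((OG132 ω).commonNeighbors a b).Infinite) : a.val.2 = b.val.2 := by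
  by_contra hne
  refine h ((finite_setOf_snd_lt (max_lt a.prop.2 b.prop.2)).subset ?_)
  rintro c ⟨hac | hca, hbc | hcb⟩ <;> show c.val.2 < _
  · exact absurd (hac.trans hbc.symm) hne
  · exact hcb ▸ lt_max_of_lt_right b.prop.1
  · exact hca ▸ lt_max_of_lt_left a.prop.1
  · exact hca ▸ lt_max_of_lt_left a.prop.1

theorem not_hasRichSquare_omega0 : ¬ (OG132 ω).HasRichSquare := by
  rintro ⟨a, b, c, d, hab, hcd, hc, hd, hab_inf, hcd_inf⟩
  have hy := snd_eq_of_infinite_commonNeighbors hab_inf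
  exact hcd (Subtype.ext (Prod.ext
    ((fst_eq_of_mem_commonNeighbors hab hy hc).trans (fst_eq_of_mem_commonNeighbors hab hy hd).symm)
    (snd_eq_of_infinite_commonNeighbors hcd_inf)))

theorem hasRichSquare_omega0_add_omega0 : (OG132 (ω + ω)).HasRichSquare := by
  have hω : ω < ω + ω := lt_add_of_pos_right ω omega0_pos
  have hω_add {n : ℕ} (hn : 0 < n) : ω < ω + n ∧ ω + n < ω + ω :=
    ⟨lt_add_of_pos_right ω (by exact_mod_cast hn), add_lt_add_right (natCast_lt_omega0 n) ω⟩
  let a : OV (ω + ω) := ⟨(ω, ω + (1 : ℕ)), hω_add one_pos⟩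
  let b : OV (ω + ω) := ⟨(ω, ω + (2 : ℕ)), hω_add two_pos⟩
  let c : OV (ω + ω) := ⟨(0, ω), omega0_pos, hω⟩
  let d : OV (ω + ω) := ⟨(1, ω), one_lt_omega0, hω⟩
  refine ⟨a, b, c, d, ?_, ?_, ⟨Or.inr rfl, Or.inr rfl⟩, ⟨Or.inr rfl, Or.inr rfl⟩,
    infinite_commonNeighbors_of_fst_eq rfl ?_, infinite_commonNeighbors_of_snd_eq rfl ?_⟩
  · intro h
    simpa [a, b] using congrArg (fun v : OV (ω + ω) => v.val.2) h
  · intro h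
    simpa [c, d] using congrArg (fun v : OV (ω + ω) => v.val.1) h
  · simpa using (infinite_Ioo_add_omega0 0).mono Set.Ioo_subset_Iio_self
  · exact infinite_Ioo_add_omega0 ω

end OG132

open Ordinal in
/-- `G(ω,132)` and `G(ω+ω,132)` are not isomorphic. -/
theorem stmt_5 : ¬ Nonempty (OG132 omega0 ≃g OG132 (omega0 + omega0)) := by
  rintro ⟨f⟩
  exact OG132.not_hasRichSquare_omega0
    (OG132.hasRichSquare_omega0_add_omega0.map f.symm.toEmbedding)
end

section
/- In the graph G(ω,1122) (vertices are pairs (x,y) of naturals with x < y; (x,y) and (z,w) with x ≤ z are adjacent iff y < z), every infinite independent set S contains an infinite subset all of whose members have the same first coordinate. -/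
/-- Vertices of `G(ω,1122)`: pairs of naturals `(x, y)` with `x < y`. -/
abbrev NV := {p : ℕ × ℕ // p.1 < p.2}

/-- The graph `G(ω, 1122)`: `(x,y)` and `(z,w)` are adjacent iff `y < z` or `w < x`. -/
def NG1122 : SimpleGraph NV where
  Adj a b := a.val.2 < b.val.1 ∨ b.val.2 < a.val.1
  symm := ⟨fun a b h => Or.symm h⟩
  loopless := ⟨fun a h => by
    rcases h with h | h <;> exact absurd (a.prop.trans h) (lt_irrefl _)⟩

/-- Every infinite independent set of `G(ω,1122)` contains an infinite subset whose
members all have the same first coordinate. -/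
theorem stmt_6 (S : Set NV) (hinf : S.Infinite)
    (hind : ∀ u ∈ S, ∀ v ∈ S, ¬ NG1122.Adj u v) :
    ∃ x : ℕ, {v ∈ S | v.val.1 = x}.Infinite := by
  obtain ⟨u0, hu0⟩ := hinf.nonempty
  -- every v ∈ S has v.1 ≤ u0.2
  have hbd : ∀ v ∈ S, v.val.1 ≤ u0.val.2 := by
    intro v hv
    by_contra h
    exact hind u0 hu0 v hv (Or.inl (lt_of_not_ge h))
  haveI : Infinite S := hinf.to_subtype
  obtain ⟨y, hy⟩ := Finite.exists_infinite_fiber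
    (fun v : S => (⟨v.val.val.1, Nat.lt_succ_of_le (hbd v v.prop)⟩ : Fin (u0.val.2 + 1)))
  refine ⟨y.val, ?_⟩
  rw [Set.infinite_coe_iff] at hy
  have : ({v ∈ S | v.val.1 = y.val} : Set NV).Infinite := by
    have := hy.image (f := fun v : S => (v : NV))
      Subtype.val_injective.injOn
    refine this.mono ?_
    rintro v ⟨⟨w, hw⟩, hmem, rfl⟩
    simp only [Set.mem_preimage, Set.mem_singleton_iff] at hmem
    exact ⟨hw, congrArg Fin.val hmem⟩
  exact this
end

section
/- The graph G(ω,1122) contains no copy of K_{ω,ω}: there are no two disjoint infinite independent sets A, B of vertices with every vertex of A adjacent to every vertex of B. -/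
/-!
Since the right endpoint bounds the left one, only finitely many vertices lie below any bound, so
an infinite set has vertices arbitrarily far to the right. Take `a₀ ∈ A`, then `b ∈ B` not to the
left of `a₀`, then `a₁ ∈ A` not to the left of `b`. Adjacency forces `a₀ < b < a₁` as intervals,
so `a₀` and `a₁` are adjacent, contradicting the independence of `A`.
-/

lemma NV.finite_setOf_snd_lt (n : ℕ) : {v : NV | v.val.2 < n}.Finite :=
  ((Set.finite_Iio n).prod (Set.finite_Iio n)).preimage Subtype.val_injective.injOn
    |>.subset fun v hv => ⟨v.prop.trans hv, hv⟩

lemma Set.Infinite.exists_le_snd {S : Set NV} (hS : S.Infinite) (n : ℕ) :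
    ∃ v ∈ S, n ≤ v.val.2 := by
  obtain ⟨v, hvS, hv⟩ := (hS.sdiff (NV.finite_setOf_snd_lt n)).nonempty
  exact ⟨v, hvS, not_lt.1 hv⟩

lemma NG1122.snd_lt_fst_of_adj {a b : NV} (h : NG1122.Adj a b) (hab : a.val.1 ≤ b.val.2) :
    a.val.2 < b.val.1 :=
  h.resolve_right hab.not_gt

/-- `G(ω,1122)` contains no copy of `K_{ω,ω}`. -/
theorem stmt_7 :
    ¬ ∃ A B : Set NV, Disjoint A B ∧ A.Infinite ∧ B.Infinite ∧
      (∀ u ∈ A, ∀ v ∈ A, ¬ NG1122.Adj u v) ∧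
      (∀ u ∈ B, ∀ v ∈ B, ¬ NG1122.Adj u v) ∧
      (∀ a ∈ A, ∀ b ∈ B, NG1122.Adj a b) := by
  rintro ⟨A, B, -, hA, hB, hAind, -, hAB⟩
  obtain ⟨a₀, ha₀⟩ := hA.nonempty
  obtain ⟨b, hb, hb_right⟩ := hB.exists_le_snd a₀.val.1
  obtain ⟨a₁, ha₁, ha₁_right⟩ := hA.exists_le_snd b.val.1
  have h₀ : a₀.val.2 < b.val.1 := NG1122.snd_lt_fst_of_adj (hAB a₀ ha₀ b hb) hb_right
  have h₁ : b.val.2 < a₁.val.1 := NG1122.snd_lt_fst_of_adj (hAB a₁ ha₁ b hb).symm ha₁_right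
  exact hAind a₀ ha₀ a₁ ha₁ (Or.inl (h₀.trans (b.prop.trans h₁)))
end

section
/- In G(ω+ω,1122), the vertex set {(0,x) : 0 < x < ω} ∪ {(ω,ω+x) : 0 < x < ω} forms a copy of K_{ω,ω}, and consequently G(ω,1122) ≇ G(ω+ω,1122). -/
def OG1122 (o : Ordinal) : SimpleGraph (OV o) where
  Adj a b := a.val.2 < b.val.1 ∨ b.val.2 < a.val.1
  symm := ⟨fun a b h => Or.symm h⟩
  loopless := ⟨fun a h => by
    rcases h with h | h <;> exact absurd (a.prop.1.trans h) (lt_irrefl _)⟩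

namespace SimpleGraph

variable {V W : Type*} {G : SimpleGraph V} {H : SimpleGraph W}

theorem isIndepSet_iff_forall_not_adj {s : Set V} :
    G.IsIndepSet s ↔ ∀ u ∈ s, ∀ v ∈ s, ¬ G.Adj u v :=
  ⟨fun h _ hu _ hv huv => h hu hv huv.ne huv, fun h u hu v hv _ => h u hu v hv⟩

structure IsInfiniteBiclique (G : SimpleGraph V) (A B : Set V) : Prop where
  infinite_left : A.Infinite
  infinite_right : B.Infinite
  isIndepSet_left : G.IsIndepSet A
  isIndepSet_right : G.IsIndepSet B
  isCompleteBetween : G.IsCompleteBetween A B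

theorem IsIndepSet.image (f : G ↪g H) {s : Set V} (h : G.IsIndepSet s) :
    H.IsIndepSet (f '' s) := by
  rintro _ ⟨u, hu, rfl⟩ _ ⟨v, hv, rfl⟩ huv
  rw [f.map_adj_iff]
  exact h hu hv (ne_of_apply_ne f huv)

theorem IsCompleteBetween.image (f : G ↪g H) {s t : Set V} (h : G.IsCompleteBetween s t) :
    H.IsCompleteBetween (f '' s) (f '' t) := by
  rintro _ ⟨u, hu, rfl⟩ _ ⟨v, hv, rfl⟩
  exact f.map_adj_iff.mpr (h hu hv)

theorem IsInfiniteBiclique.image (f : G ↪g H) {A B : Set V} (h : G.IsInfiniteBiclique A B) :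
    H.IsInfiniteBiclique (f '' A) (f '' B) where
  infinite_left := h.infinite_left.image f.injective.injOn
  infinite_right := h.infinite_right.image f.injective.injOn
  isIndepSet_left := h.isIndepSet_left.image f
  isIndepSet_right := h.isIndepSet_right.image f
  isCompleteBetween := h.isCompleteBetween.image f

end SimpleGraph

open Ordinal SimpleGraph

namespace OG1122

variable {o : Ordinal}

theorem not_adj_iff {u v : OV o} :
    ¬ (OG1122 o).Adj u v ↔ v.val.1 ≤ u.val.2 ∧ u.val.1 ≤ v.val.2 := by
  simp only [OG1122, not_or, not_lt]

theorem isIndepSet_setOf_fst_eq (x : Ordinal) : (OG1122 o).IsIndepSet {v | v.val.1 = x} := by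
  refine isIndepSet_iff_forall_not_adj.mpr fun u hu v hv => not_adj_iff.mpr ⟨?_, ?_⟩
  · exact (hv.trans hu.symm).trans_le u.prop.1.le
  · exact (hu.trans hv.symm).trans_le v.prop.1.le

theorem infinite_setOf_fst_eq {x : Ordinal} (hx : x + ω ≤ o) :
    {v : OV o | v.val.1 = x ∧ v.val.2 < x + ω}.Infinite := by
  have hlt (n : ℕ) : x + (n + 1 : ℕ) < x + ω := add_lt_add_right (natCast_lt_omega0 _) x
  refine Set.infinite_of_injective_forall_mem
    (f := fun n : ℕ => (⟨(x, x + (n + 1 : ℕ)),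
      lt_add_of_pos_right x (by exact_mod_cast n.succ_pos), (hlt n).trans_le hx⟩ : OV o))
    (fun m n hmn => ?_) (fun n => ⟨rfl, hlt n⟩)
  have : x + ((m + 1 : ℕ) : Ordinal) = x + (n + 1 : ℕ) := congrArg (·.val.2) hmn
  exact Nat.succ_injective (by exact_mod_cast add_left_cancel this)

theorem finite_setOf_snd_lt {z : Ordinal} (hz : z < ω) :
    {v : OV ω | v.val.2 < z}.Finite := by
  obtain ⟨n, rfl⟩ := lt_omega0.mp hz
  have hIio : (Set.Iio (n : Ordinal)).Finite := by
    rw [← natCast_image_Iio]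
    exact (Set.finite_Iio n).image _
  refine Set.Finite.of_finite_image ((hIio.prod hIio).subset ?_) Subtype.val_injective.injOn
  rintro _ ⟨v, hv, rfl⟩
  exact ⟨v.prop.1.trans hv, hv⟩

theorem exists_snd_lt_fst_of_forall_adj {A : Set (OV ω)} (hA : A.Infinite) {u : OV ω}
    (hu : ∀ a ∈ A, (OG1122 ω).Adj a u) : ∃ a ∈ A, u.val.2 < a.val.1 := by
  obtain ⟨a, haA, ha⟩ : ∃ a ∈ A, a ∉ {v : OV ω | v.val.2 < u.val.1} :=
    (hA.sdiff (finite_setOf_snd_lt (u.prop.1.trans u.prop.2))).nonempty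
  exact ⟨a, haA, (hu a haA).resolve_left ha⟩

theorem not_isInfiniteBiclique_omega0 (A B : Set (OV ω)) :
    ¬ (OG1122 ω).IsInfiniteBiclique A B := by
  intro h
  have indepA := isIndepSet_iff_forall_not_adj.mp h.isIndepSet_left
  have indepB := isIndepSet_iff_forall_not_adj.mp h.isIndepSet_right
  obtain ⟨a₀, ha₀⟩ := h.infinite_left.nonempty
  obtain ⟨b₀, hb₀⟩ := h.infinite_right.nonempty
  obtain ⟨a, ha, hb₀a⟩ :=
    exists_snd_lt_fst_of_forall_adj h.infinite_left fun a ha => h.isCompleteBetween ha hb₀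
  obtain ⟨b, hb, ha₀b⟩ :=
    exists_snd_lt_fst_of_forall_adj h.infinite_right fun b hb => (h.isCompleteBetween ha₀ hb).symm
  have haa₀ := (not_adj_iff.mp (indepA a₀ ha₀ a ha)).1
  have hbb₀ := (not_adj_iff.mp (indepB b₀ hb₀ b hb)).1
  exact lt_irrefl _ (((hb₀a.trans_le haa₀).trans ha₀b).trans_le hbb₀)

theorem isInfiniteBiclique_omega0_add_omega0 :
    (OG1122 (ω + ω)).IsInfiniteBiclique {v | v.val.1 = 0 ∧ v.val.2 < ω} {v | v.val.1 = ω} where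
  infinite_left := by simpa using infinite_setOf_fst_eq (x := 0) (o := ω + ω) (by simp)
  infinite_right := (infinite_setOf_fst_eq le_rfl).mono fun _ hv => hv.1
  isIndepSet_left := Set.Pairwise.mono (fun _ hv => hv.1) (isIndepSet_setOf_fst_eq 0)
  isIndepSet_right := isIndepSet_setOf_fst_eq ω
  isCompleteBetween := fun u hu v hv => Or.inl (hu.2.trans_eq hv.symm)

end OG1122

open Ordinal in
/-- In `G(ω+ω,1122)` the vertices `{(0,x) : 0 < x < ω} ∪ {(ω,ω+x) : 0 < x < ω}` form a
copy of `K_{ω,ω}`; consequently `G(ω,1122)` and `G(ω+ω,1122)` are not isomorphic. -/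
theorem stmt_8 :
    (let A : Set (OV (omega0 + omega0)) := {v | v.val.1 = 0 ∧ v.val.2 < omega0}
     let B : Set (OV (omega0 + omega0)) := {v | v.val.1 = omega0}
     A.Infinite ∧ B.Infinite ∧ Disjoint A B ∧
      (∀ u ∈ A, ∀ v ∈ A, ¬ (OG1122 (omega0 + omega0)).Adj u v) ∧
      (∀ u ∈ B, ∀ v ∈ B, ¬ (OG1122 (omega0 + omega0)).Adj u v) ∧
      (∀ u ∈ A, ∀ v ∈ B, (OG1122 (omega0 + omega0)).Adj u v)) ∧
    ¬ Nonempty (OG1122 omega0 ≃g OG1122 (omega0 + omega0)) := by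
  have h := OG1122.isInfiniteBiclique_omega0_add_omega0
  refine ⟨⟨h.infinite_left, h.infinite_right, h.isCompleteBetween.disjoint,
    isIndepSet_iff_forall_not_adj.mp h.isIndepSet_left,
    isIndepSet_iff_forall_not_adj.mp h.isIndepSet_right, fun _ hu _ hv => h.isCompleteBetween hu hv⟩,
    ?_⟩
  rintro ⟨e⟩
  -- the two conjuncts carry independent universe levels, so `h` cannot be reused here
  exact OG1122.not_isInfiniteBiclique_omega0 _ _
    (OG1122.isInfiniteBiclique_omega0_add_omega0.image e.symm.toEmbedding)
end

section
/- For all finite x ≠ y, the graphs G(ω+x,132) and G(ω+y,132) are not isomorphic. Specifically, in G(ω+x,132) the vertices of finite degree are exactly those of the form (n, ω+x−m−1) with n < ω and m < x, and such a vertex has degree n+m; hence the multiset of finite vertex degrees determines x. -/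
/-!
The neighbours of a vertex `(a, b)` of `G(o, 132)` are the `(b, z)` with `b < z < o` and the
`(t, a)` with `t < a`, so its degree is finite exactly when `a < ω` and `(b, o)` is finite.
In `G(ω + x, 132)` these are the vertices `(n, ω + k)` with `k < x`, of degree `n + (x - k - 1)`.
So for `d ≥ max x 1` exactly `x` vertices have degree `d`, one for each `k`, while the number of
vertices of a given degree is an isomorphism invariant.
-/

open Set

universe u

namespace Ordinal

theorem finite_Iio_iff {a : Ordinal.{u}} : (Iio a).Finite ↔ a < ω := by
  refine ⟨fun h => ?_, fun h => ?_⟩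
  · by_contra! hωa
    refine infinite_range_of_injective Nat.cast_injective (h.subset ?_)
    rintro _ ⟨n, rfl⟩
    exact (natCast_lt_omega0 n).trans_le hωa
  · obtain ⟨n, rfl⟩ := lt_omega0.1 h
    rw [← natCast_image_Iio]
    exact (finite_Iio n).image _

theorem ncard_Iio_natCast (n : ℕ) : (Iio (n : Ordinal.{u})).ncard = n := by
  rw [← natCast_image_Iio, ncard_image_of_injective _ Nat.cast_injective, ncard_Iio_nat]

theorem natCast_image_Ioo (k n : ℕ) : Nat.cast '' Ioo k n = Ioo (k : Ordinal.{u}) n := by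
  ext z
  constructor
  · rintro ⟨j, ⟨hkj, hjn⟩, rfl⟩
    exact ⟨Nat.cast_lt.2 hkj, Nat.cast_lt.2 hjn⟩
  · rintro ⟨hkz, hzn⟩
    obtain ⟨j, rfl⟩ := lt_omega0.1 (hzn.trans (natCast_lt_omega0 n))
    exact ⟨j, ⟨Nat.cast_lt.1 hkz, Nat.cast_lt.1 hzn⟩, rfl⟩

theorem Ioo_add_add (a b c : Ordinal.{u}) : Ioo (a + b) (a + c) = (a + ·) '' Ioo b c := by
  ext z
  constructor
  · rintro ⟨hbz, hzc⟩
    have hz : a + (z - a) = z := Ordinal.add_sub_cancel_of_le (le_self_add.trans hbz.le)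
    refine ⟨z - a, ⟨?_, ?_⟩, hz⟩ <;> rw [← add_lt_add_iff_left a, hz] <;> assumption
  · rintro ⟨w, ⟨hbw, hwc⟩, rfl⟩
    exact ⟨add_lt_add_right hbw a, add_lt_add_right hwc a⟩

theorem Ioo_add_natCast (a : Ordinal.{u}) (k n : ℕ) :
    Ioo (a + k) (a + n) = (fun j : ℕ => a + j) '' Ioo k n := by
  rw [Ioo_add_add, ← natCast_image_Ioo, image_image]

theorem finite_Ioo_add_natCast (a : Ordinal.{u}) (k n : ℕ) : (Ioo (a + k) (a + n)).Finite := by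
  rw [Ioo_add_natCast]
  exact (finite_Ioo k n).image _

theorem ncard_Ioo_add_natCast (a : Ordinal.{u}) (k n : ℕ) :
    (Ioo (a + k) (a + n)).ncard = n - k - 1 := by
  have hinj : Function.Injective fun j : ℕ => a + j :=
    fun i j h => Nat.cast_injective (add_left_cancel h)
  rw [Ioo_add_natCast, ncard_image_of_injective _ hinj, ncard_Ioo_nat]

theorem infinite_Ioo_of_lt_omega0_le {b c : Ordinal.{u}} (hb : b < ω) (hc : ω ≤ c) :
    (Ioo b c).Infinite := by
  obtain ⟨n, rfl⟩ := lt_omega0.1 hb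
  refine ((Ioi_infinite n).image Nat.cast_injective.injOn).mono ?_
  rintro _ ⟨j, hj, rfl⟩
  exact ⟨Nat.cast_lt.2 hj, (natCast_lt_omega0 j).trans_le hc⟩

end Ordinal

theorem SimpleGraph.Iso.ncard_neighborSet {V W : Type*} {G : SimpleGraph V} {H : SimpleGraph W}
    (f : G ≃g H) (v : V) : (H.neighborSet (f v)).ncard = (G.neighborSet v).ncard := by
  rw [← Nat.card_coe_set_eq, ← Nat.card_coe_set_eq, Nat.card_congr (f.mapNeighborSet v)]

theorem SimpleGraph.Iso.card_ncard_neighborSet_eq {V W : Type*} {G : SimpleGraph V}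
    {H : SimpleGraph W} (f : G ≃g H) (d : ℕ) :
    Nat.card {v // (G.neighborSet v).ncard = d} = Nat.card {w // (H.neighborSet w).ncard = d} :=
  Nat.card_congr (f.toEquiv.subtypeEquiv fun v => by rw [← f.ncard_neighborSet v]; rfl)

namespace OG132

open Ordinal

section

variable {o : Ordinal.{u}}

theorem neighborSet_eq (v : OV o) :
    (OG132 o).neighborSet v = {w | w.val.1 = v.val.2} ∪ {w | w.val.2 = v.val.1} := by
  ext w
  exact or_congr_left eq_comm

def fstEqEquiv (a : Ordinal.{u}) : {w : OV o | w.val.1 = a} ≃ Ioo a o where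
  toFun w := ⟨w.1.1.2, (Eq.symm w.2).trans_lt w.1.2.1, w.1.2.2⟩
  invFun z := ⟨⟨(a, z), z.2.1, z.2.2⟩, rfl⟩
  left_inv w := by
    obtain ⟨⟨⟨a', z⟩, _⟩, rfl : a' = a⟩ := w
    rfl
  right_inv _ := rfl

def sndEqEquiv {b : Ordinal.{u}} (hb : b < o) : {w : OV o | w.val.2 = b} ≃ Iio b where
  toFun w := ⟨w.1.1.1, w.1.2.1.trans_eq w.2⟩
  invFun t := ⟨⟨(t, b), t.2, hb⟩, rfl⟩
  left_inv w := by
    obtain ⟨⟨⟨t, b'⟩, _⟩, rfl : b' = b⟩ := w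
    rfl
  right_inv _ := rfl

theorem disjoint_fstEq_sndEq (v : OV o) :
    Disjoint {w : OV o | w.val.1 = v.val.2} {w | w.val.2 = v.val.1} := by
  refine disjoint_left.2 fun w (h₁ : w.val.1 = v.val.2) (h₂ : w.val.2 = v.val.1) => ?_
  exact (w.prop.1.trans (h₂ ▸ v.prop.1)).ne h₁

theorem finite_neighborSet_iff (v : OV o) :
    ((OG132 o).neighborSet v).Finite ↔ (Ioo v.val.2 o).Finite ∧ (Iio v.val.1).Finite := by
  rw [neighborSet_eq, finite_union, ← finite_coe_iff, ← finite_coe_iff,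
    (fstEqEquiv _).finite_iff, (sndEqEquiv (v.prop.1.trans v.prop.2)).finite_iff,
    finite_coe_iff, finite_coe_iff]

theorem ncard_neighborSet (v : OV o) (hout : (Ioo v.val.2 o).Finite) (hin : (Iio v.val.1).Finite) :
    ((OG132 o).neighborSet v).ncard = (Ioo v.val.2 o).ncard + (Iio v.val.1).ncard := by
  have hfin₁ : {w : OV o | w.val.1 = v.val.2}.Finite :=
    finite_coe_iff.1 ((fstEqEquiv _).finite_iff.2 hout.to_subtype)
  have hfin₂ : {w : OV o | w.val.2 = v.val.1}.Finite :=
    finite_coe_iff.1 ((sndEqEquiv (v.prop.1.trans v.prop.2)).finite_iff.2 hin.to_subtype)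
  rw [neighborSet_eq, ncard_union_eq (disjoint_fstEq_sndEq v) hfin₁ hfin₂,
    ← Nat.card_coe_set_eq, Nat.card_congr (fstEqEquiv _), Nat.card_coe_set_eq,
    ← Nat.card_coe_set_eq {w : OV o | w.val.2 = v.val.1},
    Nat.card_congr (sndEqEquiv (v.prop.1.trans v.prop.2)), Nat.card_coe_set_eq]

end

section

variable {x : ℕ}

theorem finite_neighborSet_iff_exists (v : OV (ω + x)) :
    ((OG132 (ω + x)).neighborSet v).Finite ↔
      ∃ n k : ℕ, k < x ∧ v.val = ((n : Ordinal), ω + k) := by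
  rw [finite_neighborSet_iff]
  constructor
  · rintro ⟨hout, hin⟩
    obtain ⟨n, hn⟩ := lt_omega0.1 (finite_Iio_iff.1 hin)
    have hωb : ω ≤ v.val.2 := by
      by_contra! h
      exact infinite_Ioo_of_lt_omega0_le h le_self_add hout
    obtain ⟨c, hc⟩ := exists_add_of_le hωb
    have hcx : c < x := by
      rw [← add_lt_add_iff_left ω, ← hc]
      exact v.prop.2
    obtain ⟨k, rfl⟩ := lt_omega0.1 (hcx.trans (natCast_lt_omega0 x))
    exact ⟨n, k, Nat.cast_lt.1 hcx, Prod.ext hn hc⟩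
  · rintro ⟨n, k, -, hv⟩
    rw [hv]
    exact ⟨finite_Ioo_add_natCast ω k x, finite_Iio_iff.2 (natCast_lt_omega0 n)⟩

theorem ncard_neighborSet_of_val_eq {v : OV (ω + x)} {n k : ℕ}
    (hv : v.val = ((n : Ordinal), ω + k)) :
    ((OG132 (ω + x)).neighborSet v).ncard = n + (x - k - 1) := by
  obtain ⟨⟨a, b⟩, hab⟩ := v
  obtain ⟨rfl, rfl⟩ := Prod.mk.inj hv
  rw [ncard_neighborSet _ (finite_Ioo_add_natCast ω k x) (finite_Iio_iff.2 (natCast_lt_omega0 n)),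
    ncard_Ioo_add_natCast, ncard_Iio_natCast, add_comm]

end

-- `ncard` is `0` on infinite sets, so `d ≠ 0` keeps the vertices of infinite degree out.
theorem card_ncard_neighborSet_eq_of_le {x d : ℕ} (hd : d ≠ 0) (hxd : x ≤ d) :
    Nat.card {v : OV (ω + x) // ((OG132 (ω + x)).neighborSet v).ncard = d} = x := by
  let f : Fin x → OV (ω + x) := fun k =>
    ⟨(((d - (x - k - 1) : ℕ) : Ordinal), ω + k), (natCast_lt_omega0 _).trans_le le_self_add,
      add_lt_add_right (Nat.cast_lt.2 k.2) ω⟩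
  have hf : Function.Injective f := fun k k' h =>
    Fin.ext (Nat.cast_injective (add_left_cancel (congrArg (fun v => v.val.2) h)))
  have hrange : ∀ v, ((OG132 (ω + x)).neighborSet v).ncard = d ↔ v ∈ range f := by
    intro v
    constructor
    · intro hv
      obtain ⟨n, k, hk, hval⟩ :=
        (finite_neighborSet_iff_exists v).1 (finite_of_ncard_ne_zero (hv ▸ hd))
      rw [ncard_neighborSet_of_val_eq hval] at hv
      refine ⟨⟨k, hk⟩, Subtype.ext ?_⟩
      change (((d - (x - k - 1) : ℕ) : Ordinal), ω + k) = v.val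
      rw [hval, show d - (x - k - 1) = n by omega]
    · rintro ⟨k, rfl⟩
      rw [ncard_neighborSet_of_val_eq rfl]
      omega
  exact (Nat.card_congr (Equiv.subtypeEquivRight hrange)).trans
    ((Nat.card_range_of_injective hf).trans (Nat.card_fin x))

theorem not_nonempty_iso {x y : ℕ} (hxy : x ≠ y) :
    ¬ Nonempty (OG132 (ω + x) ≃g OG132 (ω + y)) := by
  rintro ⟨f⟩
  have hd : max x y ≠ 0 := by omega
  have hcard := f.card_ncard_neighborSet_eq (max x y)
  rw [card_ncard_neighborSet_eq_of_le hd (le_max_left x y),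
    card_ncard_neighborSet_eq_of_le hd (le_max_right x y)] at hcard
  exact hxy hcard

end OG132

open Ordinal in
/-- For finite `x ≠ y`, `G(ω+x,132) ≇ G(ω+y,132)`.  Moreover, in `G(ω+x,132)` the
vertices of finite degree are exactly those of the form `(n, ω+x-m-1)` with `n < ω`
and `m < x`, and such a vertex has degree `n + m`. -/
theorem stmt_9 (x y : ℕ) (hxy : x ≠ y) :
    ¬ Nonempty (OG132 (omega0 + x) ≃g OG132 (omega0 + y)) ∧
    ∀ v : OV (omega0 + x),
      (((OG132 (omega0 + x)).neighborSet v).Finite ↔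
        ∃ n m : ℕ, m < x ∧ v.val = ((n : Ordinal), omega0 + ((x - m - 1 : ℕ) : Ordinal))) ∧
      (∀ n m : ℕ, m < x → v.val = ((n : Ordinal), omega0 + ((x - m - 1 : ℕ) : Ordinal)) →
        ((OG132 (omega0 + x)).neighborSet v).ncard = n + m) := by
  refine ⟨OG132.not_nonempty_iso hxy, fun v => ⟨?_, fun n m hm hv => ?_⟩⟩
  · rw [OG132.finite_neighborSet_iff_exists]
    constructor
    · rintro ⟨n, k, hk, hv⟩
      refine ⟨n, x - k - 1, by omega, ?_⟩
      rwa [show x - (x - k - 1) - 1 = k by omega]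
    · rintro ⟨n, m, hm, hv⟩
      exact ⟨n, x - m - 1, by omega, hv⟩
  · rw [OG132.ncard_neighborSet_of_val_eq hv]
    omega
end

section
/- In the graph G(α,132) for a limit ordinal α, the unique set B of vertices such that (i) B is a maximal independent set and (ii) the neighbour sets of distinct vertices in B are pairwise disjoint, is B = {(0,β) : 0 < β < α}. -/
/-- For a limit ordinal `α`, the unique set of vertices of `G(α,132)` that is a maximal
independent set whose members have pairwise disjoint neighbour sets is
`{(0,β) : 0 < β < α}`. -/
theorem stmt_11 (α : Ordinal) (hα : Order.IsSuccLimit α) (B : Set (OV α)) :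
    ((∀ u ∈ B, ∀ v ∈ B, ¬ (OG132 α).Adj u v) ∧
     (∀ w, w ∉ B → ∃ u ∈ B, (OG132 α).Adj u w) ∧
     (∀ u ∈ B, ∀ v ∈ B, u ≠ v →
        Disjoint ((OG132 α).neighborSet u) ((OG132 α).neighborSet v))) ↔
    B = {v : OV α | v.val.1 = 0} := by
  constructor
  · rintro ⟨hind, hmax, hdisj⟩
    -- First: every member of B has first coordinate 0.
    have hsub : ∀ u ∈ B, u.val.1 = 0 := by
      intro u hu
      by_contra hx
      have hy : (0 : Ordinal) < u.val.2 := zero_le.trans_lt u.prop.1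
      set w : OV α := ⟨(0, u.val.2), hy, u.prop.2⟩ with hw
      have hwB : w ∉ B := by
        intro hwB
        have hne : w ≠ u := by
          intro h
          exact hx (by rw [← h])
        have hd := hdisj w hwB u hu hne
        have hs : Order.succ u.val.2 < α := hα.succ_lt u.prop.2
        set n : OV α := ⟨(u.val.2, Order.succ u.val.2), Order.lt_succ _, hs⟩ with hn
        have h1 : n ∈ (OG132 α).neighborSet w := Or.inl rfl
        have h2 : n ∈ (OG132 α).neighborSet u := Or.inl rfl
        exact Set.disjoint_left.mp hd h1 h2
      obtain ⟨v, hv, hadj⟩ := hmax w hwB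
      rcases hadj with h | h
      · -- v.2 = w.1 = 0, impossible
        exact absurd h (v.prop.1.trans_le' zero_le).ne'
      · -- w.2 = v.1, i.e. v.1 = u.2, so u adjacent to v
        exact hind u hu v hv (Or.inl h)
    ext u
    simp only [Set.mem_setOf_eq]
    constructor
    · exact hsub u
    · intro h0
      by_contra hu
      obtain ⟨v, hv, hadj⟩ := hmax u hu
      rcases hadj with h | h
      · -- v.2 = u.1 = 0, impossible
        rw [h0] at h
        exact absurd h (v.prop.1.trans_le' zero_le).ne'
      · -- u.2 = v.1, but v.1 = 0 and u.2 > 0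
        have h2 : (0 : Ordinal) < u.val.2 := by rw [← h0]; exact u.prop.1
        exact absurd (h.trans (hsub v hv)) h2.ne'
  · rintro rfl
    refine ⟨?_, ?_, ?_⟩
    · rintro u hu v hv (h | h)
      · rw [Set.mem_setOf_eq] at hv hu
        have h2 : (0 : Ordinal) < u.val.2 := by rw [← hu]; exact u.prop.1
        exact absurd (h.trans hv) h2.ne'
      · rw [Set.mem_setOf_eq] at hu hv
        have h2 : (0 : Ordinal) < v.val.2 := by rw [← hv]; exact v.prop.1
        exact absurd (h.trans hu) h2.ne'
    · intro w hw
      rw [Set.mem_setOf_eq] at hw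
      have h1 : (0 : Ordinal) < w.val.1 := pos_iff_ne_zero.mpr hw
      refine ⟨⟨(0, w.val.1), h1, w.prop.1.trans w.prop.2⟩, rfl, Or.inl rfl⟩
    · intro u hu v hv hne
      rw [Set.mem_setOf_eq] at hu hv
      rw [Set.disjoint_left]
      rintro n (h1 | h1) (h2 | h2)
      · -- u.2 = n.1 and v.2 = n.1
        apply hne
        apply Subtype.ext
        apply Prod.ext (hu.trans hv.symm) (h1.trans h2.symm)
      all_goals {
        first
        | exact absurd (h2.trans hv) (zero_le.trans_lt n.prop.1).ne'
        | exact absurd (h1.trans hu) (zero_le.trans_lt n.prop.1).ne' }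
end

section
/- For any ordinal α, the only automorphism of G(α,132) with α infinite is the identity; i.e., the automorphism group of G(α,132) is trivial for infinite α. -/
/-!
An edge of `G(α,132)` joins `(x, y)` to `(y, z)`, so the vertices meeting at a point `t` form a
complete bipartite "star" between the column `{(x, t)}` and the row `{(t, z)}`, and every 4-cycle
lies in one star. Hence an automorphism maps each star with two vertices on either side (`t` with
`2 ≤ t` and `t + 2 < α`) into a star, keeping or swapping column and row. Swapping is contagious
and reverses the order of the points, which the infinitely many stars of `2, 3, …` forbid in a
well-order; so the induced map on points is strictly monotone with a strictly monotone inverse,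
hence the identity. This fixes every coordinate in `[2, α - 2)`; the vertices `(0, 1)` and, when
`α = γ + 2`, `(γ, γ + 1)` are then fixed through their neighbours in rich stars, and adjacency to
these two settles the remaining coordinates `0, 1, γ, γ + 1`.
-/

open Ordinal

theorem SimpleGraph.Iso.adj_apply_iff_of_apply_eq {V : Type*} {G : SimpleGraph V} (f : G ≃g G)
    {u v : V} (hu : f u = u) : G.Adj u (f v) ↔ G.Adj u v := by
  conv_lhs => rw [← hu]
  exact f.map_adj_iff

section SuccAddOrder

variable {β : Type*} [LinearOrder β] [AddMonoidWithOne β] [SuccAddOrder β] [NoMaxOrder β]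
  {a b c d : β}

theorem add_two_le_of_lt_of_lt (hab : a < b) (hbc : b < c) : a + 2 ≤ c := by
  rw [← one_add_one_eq_two, ← add_assoc, Order.add_one_le_iff]
  exact (Order.add_one_le_iff.2 hab).trans_lt hbc

theorem add_two_lt_of_lt_of_lt_of_ne (ha : c < a) (hb : c < b) (had : a < d) (hbd : b < d)
    (hab : a ≠ b) : c + 2 < d := by
  rcases hab.lt_or_gt with h | h
  · exact (add_two_le_of_lt_of_lt ha h).trans_lt hbd
  · exact (add_two_le_of_lt_of_lt hb h).trans_lt had

theorem eq_add_one_or_add_two_eq (hab : a < b) (hb : b ≤ a + 2) : b = a + 1 ∨ a + 2 = b := by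
  rcases (Order.add_one_le_iff.2 hab).eq_or_lt with h | h
  · exact Or.inl h.symm
  · refine Or.inr (le_antisymm ?_ hb)
    rw [← one_add_one_eq_two, ← add_assoc]
    exact Order.add_one_le_iff.2 h

end SuccAddOrder

namespace Ordinal

variable {a b c : Ordinal}

theorem two_le_of_lt_of_lt_of_ne (ha : a < c) (hb : b < c) (hab : a ≠ b) : 2 ≤ c := by
  rcases hab.lt_or_gt with h | h
  · simpa using add_two_le_of_lt_of_lt (pos_of_gt h) hb
  · simpa using add_two_le_of_lt_of_lt (pos_of_gt h) ha

theorem two_lt_of_omega0_le_add_two (h : ω ≤ a + 2) : 2 < a := by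
  by_contra! ha
  have h2 : (2 : Ordinal) < ω := by simpa using natCast_lt_omega0 2
  exact (isPrincipal_add_omega0 (ha.trans_lt h2) h2).not_ge h

end Ordinal

namespace OG132

variable {α : Ordinal}

section CommonNeighbours

variable {u u' w w' : OV α}

theorem not_adj_of_snd_eq (h : u.val.2 = w.val.2) : ¬ (OG132 α).Adj u w := by
  rintro (huw | hwu)
  · exact w.prop.1.ne (huw.symm.trans h)
  · exact u.prop.1.ne (hwu.symm.trans h.symm)

theorem snd_eq_of_adj_of_fst_eq (hww' : w ≠ w') (h : w.val.1 = w'.val.1)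
    (huw : (OG132 α).Adj u w) (huw' : (OG132 α).Adj u w') : u.val.2 = w.val.1 := by
  rw [Ne, Subtype.ext_iff, Prod.ext_iff] at hww'
  simp only [OG132] at huw huw'
  grind

theorem fst_eq_of_adj_of_snd_eq (hww' : w ≠ w') (h : w.val.2 = w'.val.2)
    (huw : (OG132 α).Adj u w) (huw' : (OG132 α).Adj u w') : u.val.1 = w.val.2 := by
  rw [Ne, Subtype.ext_iff, Prod.ext_iff] at hww'
  simp only [OG132] at huw huw'
  grind

/-- Otherwise a common neighbour of `w` and `w'` is `(w'.2, w.1)` or `(w.2, w'.1)`, and having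
both would give the cycle `w'.2 < w.1 < w.2 < w'.1 < w'.2`. -/
theorem fst_eq_or_snd_eq_of_adj (huu' : u ≠ u') (huw : (OG132 α).Adj u w)
    (huw' : (OG132 α).Adj u w') (hu'w : (OG132 α).Adj u' w) (hu'w' : (OG132 α).Adj u' w') :
    w.val.1 = w'.val.1 ∨ w.val.2 = w'.val.2 := by
  rw [Ne, Subtype.ext_iff, Prod.ext_iff] at huu'
  have := u.prop.1; have := u'.prop.1; have := w.prop.1; have := w'.prop.1
  simp only [OG132] at huw huw' hu'w hu'w'
  grind

end CommonNeighbours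

/-- `t` is rich when its column `{v | v.2 = t}` and its row `{v | v.1 = t}` both contain two
vertices. -/
def IsRich (α t : Ordinal) : Prop := 2 ≤ t ∧ t + 2 < α

namespace IsRich

variable {t : Ordinal}

theorem lt (ht : IsRich α t) : t < α := (lt_add_of_pos_right t two_pos).trans ht.2

theorem add_one_lt (ht : IsRich α t) : t + 1 < α := lt_trans (by simp) ht.2

theorem of_lt_omega0 (hα : ω ≤ α) (h2 : 2 ≤ t) (ht : t < ω) : IsRich α t :=
  ⟨h2, (isPrincipal_add_omega0 ht (by simpa using natCast_lt_omega0 2)).trans_le hα⟩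

theorem two (hα : ω ≤ α) : IsRich α 2 :=
  of_lt_omega0 hα le_rfl (by simpa using natCast_lt_omega0 2)

theorem natCast_add_two (hα : ω ≤ α) (n : ℕ) : IsRich α (n + 2 : ℕ) :=
  of_lt_omega0 hα (by exact_mod_cast Nat.le_add_left 2 n) (natCast_lt_omega0 _)

theorem exists_ne (ht : IsRich α t) : ∃ c₁ c₂ r₁ r₂ : OV α, c₁ ≠ c₂ ∧ r₁ ≠ r₂ ∧
    c₁.val.2 = t ∧ c₂.val.2 = t ∧ r₁.val.1 = t ∧ r₂.val.1 = t :=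
  ⟨⟨(0, t), two_pos.trans_le ht.1, ht.lt⟩, ⟨(1, t), one_lt_two.trans_le ht.1, ht.lt⟩,
    ⟨(t, t + 1), lt_add_one t, ht.add_one_lt⟩, ⟨(t, t + 2), lt_add_of_pos_right t two_pos, ht.2⟩,
    by simp, by simp, rfl, rfl, rfl, rfl⟩

theorem of_ne {c₁ c₂ r₁ r₂ : OV α} (hc : c₁ ≠ c₂) (hr : r₁ ≠ r₂) (hc₁ : c₁.val.2 = t)
    (hc₂ : c₂.val.2 = t) (hr₁ : r₁.val.1 = t) (hr₂ : r₂.val.1 = t) : IsRich α t := by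
  refine ⟨two_le_of_lt_of_lt_of_ne (hc₁ ▸ c₁.prop.1) (hc₂ ▸ c₂.prop.1) fun h => hc ?_,
    add_two_lt_of_lt_of_lt_of_ne (hr₁ ▸ r₁.prop.1) (hr₂ ▸ r₂.prop.1) r₁.prop.2 r₂.prop.2
      fun h => hr ?_⟩
  · exact Subtype.ext (Prod.ext h (hc₁.trans hc₂.symm))
  · exact Subtype.ext (Prod.ext (hr₁.trans hr₂.symm) h)

end IsRich

variable (f : OG132 α ≃g OG132 α)

/-- The star of `t` is the complete bipartite graph between the column and the row of `t`;
`f` maps it into the star of `t'`, either side by side or with the two sides swapped. -/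
def MapsStar (t t' : Ordinal) : Prop :=
  (∀ v : OV α, v.val.2 = t → (f v).val.2 = t') ∧ (∀ v : OV α, v.val.1 = t → (f v).val.1 = t')

def SwapsStar (t t' : Ordinal) : Prop :=
  (∀ v : OV α, v.val.2 = t → (f v).val.1 = t') ∧ (∀ v : OV α, v.val.1 = t → (f v).val.2 = t')

variable {f} {s t s' t' : Ordinal}

theorem mapsStar_or_swapsStar (ht : IsRich α t) : ∃ t', MapsStar f t t' ∨ SwapsStar f t t' := by
  obtain ⟨c₁, c₂, r₁, r₂, hc, hr, hc₁, hc₂, hr₁, hr₂⟩ := ht.exists_ne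
  replace hc : f c₁ ≠ f c₂ := f.injective.ne hc
  replace hr : f r₁ ≠ f r₂ := f.injective.ne hr
  have hcol {v r : OV α} (hv : v.val.2 = t) (hr : r.val.1 = t) : (OG132 α).Adj (f v) (f r) :=
    f.map_adj_iff.2 (Or.inl (hv.trans hr.symm))
  have hrow {v c : OV α} (hv : v.val.1 = t) (hc : c.val.2 = t) : (OG132 α).Adj (f v) (f c) :=
    f.map_adj_iff.2 (Or.inr (hc.trans hv.symm))
  rcases fst_eq_or_snd_eq_of_adj hc (hcol hc₁ hr₁) (hcol hc₁ hr₂) (hcol hc₂ hr₁)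
    (hcol hc₂ hr₂) with h | h
  · have hcol' {v : OV α} (hv : v.val.2 = t) : (f v).val.2 = (f r₁).val.1 :=
      snd_eq_of_adj_of_fst_eq hr h (hcol hv hr₁) (hcol hv hr₂)
    refine ⟨_, Or.inl ⟨fun v hv => hcol' hv, fun v hv => ?_⟩⟩
    rw [← hcol' hc₁]
    exact fst_eq_of_adj_of_snd_eq hc ((hcol' hc₁).trans (hcol' hc₂).symm) (hrow hv hc₁)
      (hrow hv hc₂)
  · have hcol' {v : OV α} (hv : v.val.2 = t) : (f v).val.1 = (f r₁).val.2 :=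
      fst_eq_of_adj_of_snd_eq hr h (hcol hv hr₁) (hcol hv hr₂)
    refine ⟨_, Or.inr ⟨fun v hv => hcol' hv, fun v hv => ?_⟩⟩
    rw [← hcol' hc₁]
    exact snd_eq_of_adj_of_fst_eq hc ((hcol' hc₁).trans (hcol' hc₂).symm) (hrow hv hc₁)
      (hrow hv hc₂)

theorem MapsStar.isRich (ht : IsRich α t) (h : MapsStar f t t') : IsRich α t' := by
  obtain ⟨c₁, c₂, r₁, r₂, hc, hr, hc₁, hc₂, hr₁, hr₂⟩ := ht.exists_ne
  exact IsRich.of_ne (f.injective.ne hc) (f.injective.ne hr) (h.1 c₁ hc₁) (h.1 c₂ hc₂)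
    (h.2 r₁ hr₁) (h.2 r₂ hr₂)

theorem MapsStar.lt_of_lt (hst : s < t) (ht : t < α) (hs : MapsStar f s s')
    (ht' : MapsStar f t t') : s' < t' := by
  let v : OV α := ⟨(s, t), hst, ht⟩
  simpa only [hs.2 v rfl, ht'.1 v rfl] using (f v).prop.1

theorem SwapsStar.lt_of_lt (hst : s < t) (ht : t < α) (hs : SwapsStar f s s')
    (ht' : SwapsStar f t t') : t' < s' := by
  let v : OV α := ⟨(s, t), hst, ht⟩
  simpa only [hs.2 v rfl, ht'.1 v rfl] using (f v).prop.1

theorem not_mapsStar_of_swapsStar (hs : IsRich α s) (ht : IsRich α t) (hm : MapsStar f s s') :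
    ¬ SwapsStar f t t' := by
  intro hw
  -- for `s ≠ t` the images of `(min s t, max s t + 1)` and `(max s t, max s t + 1)`, which share a
  -- column, would be adjacent
  rcases lt_trichotomy s t with hst | rfl | hts
  · let v : OV α := ⟨(s, t), hst, ht.lt⟩
    let u₁ : OV α := ⟨(s, t + 1), hst.trans (lt_add_one t), ht.add_one_lt⟩
    let u₂ : OV α := ⟨(t, t + 1), lt_add_one t, ht.add_one_lt⟩
    have hst' : s' = t' := (hm.2 v rfl).symm.trans (hw.1 v rfl)
    have hadj : (OG132 α).Adj (f u₂) (f u₁) :=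
      Or.inl ((hw.2 u₂ rfl).trans (hst'.symm.trans (hm.2 u₁ rfl).symm))
    exact not_adj_of_snd_eq (u := u₂) (w := u₁) rfl (f.map_adj_iff.1 hadj)
  · obtain ⟨c, -, r, -, -, -, hc, -, hr, -⟩ := hs.exists_ne
    have h₁ : t' < s' := by simpa only [hw.1 c hc, hm.1 c hc] using (f c).prop.1
    have h₂ : s' < t' := by simpa only [hm.2 r hr, hw.2 r hr] using (f r).prop.1
    exact h₁.not_gt h₂
  · let v : OV α := ⟨(t, s), hts, hs.lt⟩
    let u₁ : OV α := ⟨(t, s + 1), hts.trans (lt_add_one s), hs.add_one_lt⟩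
    let u₂ : OV α := ⟨(s, s + 1), lt_add_one s, hs.add_one_lt⟩
    have hts' : t' = s' := (hw.2 v rfl).symm.trans (hm.1 v rfl)
    have hadj : (OG132 α).Adj (f u₁) (f u₂) :=
      Or.inl ((hw.2 u₁ rfl).trans (hts'.trans (hm.2 u₂ rfl).symm))
    exact not_adj_of_snd_eq (u := u₁) (w := u₂) rfl (f.map_adj_iff.1 hadj)

variable (f)

/-- If `f` swapped one rich star, it would swap all of them, and the images of the stars of
`2, 3, 4, …` would form a descending sequence of ordinals. -/
theorem exists_mapsStar (hα : ω ≤ α) (ht : IsRich α t) : ∃ t', MapsStar f t t' := by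
  obtain ⟨t₀, h | h⟩ := mapsStar_or_swapsStar ht
  · exact ⟨t₀, h⟩
  have hswap (n : ℕ) : ∃ o, SwapsStar f (n + 2 : ℕ) o := by
    obtain ⟨o, ho | ho⟩ := mapsStar_or_swapsStar (f := f) (IsRich.natCast_add_two hα n)
    · exact (not_mapsStar_of_swapsStar (IsRich.natCast_add_two hα n) ht ho h).elim
    · exact ⟨o, ho⟩
  choose o ho using hswap
  refine (not_strictAnti_of_wellFoundedLT o (strictAnti_nat_of_succ_lt fun n => ?_)).elim
  exact (ho n).lt_of_lt (by norm_cast; omega) (IsRich.natCast_add_two hα (n + 1)).lt (ho (n + 1))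

variable {f}

theorem MapsStar.le (hα : ω ≤ α) (ht : IsRich α t) (h : MapsStar f t t') : t ≤ t' := by
  induction t using WellFoundedLT.induction generalizing t' with
  | _ t ih =>
    by_contra! hlt
    have ht' := h.isRich ht
    obtain ⟨t'', h'⟩ := exists_mapsStar f hα ht'
    exact (h'.lt_of_lt hlt ht.lt h).not_ge (ih t' hlt ht' h')

theorem MapsStar.eq (hα : ω ≤ α) (ht : IsRich α t) (h : MapsStar f t t') : t' = t := by
  have ht' := h.isRich ht
  obtain ⟨t'', h'⟩ := exists_mapsStar f.symm hα ht'
  obtain ⟨c, -, -, -, -, -, hc, -⟩ := ht.exists_ne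
  have ht'' : t'' = t := by simpa [hc] using (h'.1 (f c) (h.1 c hc)).symm
  exact le_antisymm (ht'' ▸ h'.le hα ht') (h.le hα ht)

theorem val_eq_zero_one {v : OV α} (hv : v.val.2 < 2) : v.val = (0, 1) := by
  have hv1 := v.prop.1
  rw [Order.lt_two_iff, Order.le_one_iff] at hv
  rcases hv with h | h
  · exact absurd (h ▸ hv1) (by simp)
  · rw [h, Order.lt_one_iff] at hv1
    exact Prod.ext hv1 h

theorem adj_zero_one_iff (h : 1 < α) {w : OV α} :
    (OG132 α).Adj ⟨(0, 1), zero_lt_one, h⟩ w ↔ w.val.1 = 1 := by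
  have hw : w.val.2 ≠ 0 := (pos_of_gt w.prop.1).ne'
  simp [OG132, hw, eq_comm]

theorem add_two_eq_and_snd_eq {v : OV α} (hv : α ≤ v.val.1 + 2) :
    v.val.1 + 2 = α ∧ v.val.2 = v.val.1 + 1 := by
  have hα : v.val.1 + 2 = α := le_antisymm (add_two_le_of_lt_of_lt v.prop.1 v.prop.2) hv
  refine ⟨hα, le_antisymm (Order.lt_add_one_iff.1 ?_) (Order.add_one_le_iff.2 v.prop.1)⟩
  rw [add_assoc, one_add_one_eq_two, hα]
  exact v.prop.2

theorem eq_of_add_two_le_fst {u w : OV α} (hu : α ≤ u.val.1 + 2) (hw : α ≤ w.val.1 + 2) :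
    u = w := by
  obtain ⟨huα, hu2⟩ := add_two_eq_and_snd_eq hu
  obtain ⟨hwα, hw2⟩ := add_two_eq_and_snd_eq hw
  have h1 : u.val.1 = w.val.1 := (Ordinal.add_right_cancel 2).1 (by simpa using huα.trans hwα.symm)
  exact Subtype.ext (Prod.ext h1 (by rw [hu2, hw2, h1]))

variable (f)

theorem fst_apply_of_isRich (hα : ω ≤ α) {v : OV α}
    (hv : IsRich α v.val.1 ∨ IsRich α (f v).val.1) : (f v).val.1 = v.val.1 := by
  have key (g : OG132 α ≃g OG132 α) (w : OV α) (hw : IsRich α w.val.1) : (g w).val.1 = w.val.1 := by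
    obtain ⟨t', h⟩ := exists_mapsStar g hα hw
    rw [h.2 w rfl, h.eq hα hw]
  rcases hv with hv | hv
  · exact key f v hv
  · simpa using (key f.symm (f v) hv).symm

theorem snd_apply_of_isRich (hα : ω ≤ α) {v : OV α}
    (hv : IsRich α v.val.2 ∨ IsRich α (f v).val.2) : (f v).val.2 = v.val.2 := by
  have key (g : OG132 α ≃g OG132 α) (w : OV α) (hw : IsRich α w.val.2) : (g w).val.2 = w.val.2 := by
    obtain ⟨t', h⟩ := exists_mapsStar g hα hw
    rw [h.1 w rfl, h.eq hα hw]
  rcases hv with hv | hv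
  · exact key f v hv
  · simpa using (key f.symm (f v) hv).symm

theorem apply_eq_self_of_snd_lt_two (hα : ω ≤ α) {v : OV α} (hv : v.val.2 < 2) : f v = v := by
  have hv' := val_eq_zero_one hv
  let e : OV α := ⟨(1, 2), one_lt_two, (IsRich.two hα).lt⟩
  have he : (f e).val.2 = 2 := snd_apply_of_isRich f hα (Or.inl (IsRich.two hα))
  have hadj : (OG132 α).Adj (f v) (f e) := f.map_adj_iff.2 (Or.inl (by rw [hv']))
  refine Subtype.ext ((val_eq_zero_one ?_).trans hv'.symm)
  rcases hadj with h | h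
  · rw [h]
    exact (f e).prop.1.trans_eq he
  · have h2 : (f v).val.1 = 2 := h.symm.trans he
    have h0 := fst_apply_of_isRich f hα (Or.inr (by rw [h2]; exact IsRich.two hα))
    rw [hv', h2] at h0
    exact absurd h0 two_ne_zero

theorem apply_eq_self_of_add_two_le_fst (hα : ω ≤ α) {v : OV α} (hv : α ≤ v.val.1 + 2) :
    f v = v := by
  obtain ⟨hαv, -⟩ := add_two_eq_and_snd_eq hv
  let e : OV α :=
    ⟨(2, v.val.1), two_lt_of_omega0_le_add_two (hα.trans hαv.ge), v.prop.1.trans v.prop.2⟩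
  have he : (f e).val.1 = 2 := fst_apply_of_isRich f hα (Or.inl (IsRich.two hα))
  have hadj : (OG132 α).Adj (f v) (f e) := f.map_adj_iff.2 (Or.inr rfl)
  refine eq_of_add_two_le_fst ?_ hv
  rcases hadj with h | h
  · have h2 : (f v).val.2 = 2 := h.trans he
    have hv2 := snd_apply_of_isRich f hα (Or.inr (by rw [h2]; exact IsRich.two hα))
    have h2v : (2 : Ordinal) < v.val.2 := (show (2 : Ordinal) < v.val.1 from e.prop.1).trans
      v.prop.1
    rw [← hv2, h2] at h2v
    exact (lt_irrefl _ h2v).elim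
  · have h2 : 2 < (f v).val.1 := by rw [← h, ← he]; exact (f e).prop.1
    by_contra! hlt
    rw [fst_apply_of_isRich f hα (Or.inr ⟨h2.le, hlt⟩), hαv] at hlt
    exact lt_irrefl _ hlt

theorem snd_apply_of_add_two_eq (hα : ω ≤ α) {v : OV α} (hv : v.val.2 + 2 = α) :
    (f v).val.2 = v.val.2 := by
  let e : OV α := ⟨(v.val.2, v.val.2 + 1), lt_add_one _,
    (by simp : v.val.2 + 1 < v.val.2 + 2).trans_eq hv⟩
  have he : f e = e := apply_eq_self_of_add_two_le_fst f hα hv.ge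
  have hadj : (OG132 α).Adj e (f v) := (f.adj_apply_iff_of_apply_eq he).2 (Or.inr rfl)
  rcases hadj with h | h
  · have h2 : v.val.2 + 1 + 1 ≤ (f v).val.2 := Order.add_one_le_iff.2 (h.trans_lt (f v).prop.1)
    rw [add_assoc, one_add_one_eq_two, hv] at h2
    exact absurd (f v).prop.2 h2.not_gt
  · exact h

theorem fst_apply (hα : ω ≤ α) (v : OV α) : (f v).val.1 = v.val.1 := by
  by_cases hr : IsRich α v.val.1 ∨ IsRich α (f v).val.1
  · exact fst_apply_of_isRich f hα hr
  by_cases htop : α ≤ v.val.1 + 2 ∨ α ≤ (f v).val.1 + 2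
  · rcases htop with h | h
    · rw [apply_eq_self_of_add_two_le_fst f hα h]
    · rw [f.injective (apply_eq_self_of_add_two_le_fst f hα h)]
  simp only [IsRich, not_or, not_and, not_lt] at hr htop
  have hv : v.val.1 < 2 := not_le.1 fun h => htop.1 (hr.1 h)
  have hfv : (f v).val.1 < 2 := not_le.1 fun h => htop.2 (hr.2 h)
  -- both first coordinates are `0` or `1`, and only `1` gives a neighbour of the fixed `(0, 1)`
  have h1 : 1 < α := one_lt_two.trans (IsRich.two hα).lt
  have hadj := f.adj_apply_iff_of_apply_eq (v := v)
    (apply_eq_self_of_snd_lt_two f hα (v := ⟨(0, 1), zero_lt_one, h1⟩) one_lt_two)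
  rw [adj_zero_one_iff h1, adj_zero_one_iff h1] at hadj
  rw [Order.lt_two_iff, Order.le_one_iff] at hv hfv
  rcases hv with hv | hv <;> rcases hfv with hfv | hfv <;> simp_all

theorem snd_apply (hα : ω ≤ α) (v : OV α) : (f v).val.2 = v.val.2 := by
  by_cases hr : IsRich α v.val.2 ∨ IsRich α (f v).val.2
  · exact snd_apply_of_isRich f hα hr
  by_cases hlow : v.val.2 < 2 ∨ (f v).val.2 < 2
  · rcases hlow with h | h
    · rw [apply_eq_self_of_snd_lt_two f hα h]
    · rw [f.injective (apply_eq_self_of_snd_lt_two f hα h)]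
  simp only [IsRich, not_or, not_and, not_lt] at hr hlow
  rcases eq_add_one_or_add_two_eq v.prop.2 (hr.1 hlow.1) with h | h
  · rcases eq_add_one_or_add_two_eq (f v).prop.2 (hr.2 hlow.2) with h' | h'
    · exact Order.add_one_inj.1 (h'.symm.trans h)
    · simpa using (snd_apply_of_add_two_eq f.symm hα h').symm
  · exact snd_apply_of_add_two_eq f hα h

end OG132

open Ordinal in
/-- For infinite `α`, the only automorphism of `G(α,132)` is the identity. -/
theorem stmt_13 (α : Ordinal) (hα : omega0 ≤ α) (f : OG132 α ≃g OG132 α) (v : OV α) :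
    f v = v :=
  Subtype.ext (Prod.ext (OG132.fst_apply f hα v) (OG132.snd_apply f hα v))
end

section
/- For finite n ≥ 3, the automorphism group of G(n,132) is isomorphic to ℤ/2ℤ, generated by the order-reversal map sending (x,y) to (n−1−y, n−1−x). -/
/-- Vertices of `G(n,132)`: pairs of naturals `(x, y)` with `x < y < n`. -/
abbrev FV (n : ℕ) := {p : ℕ × ℕ // p.1 < p.2 ∧ p.2 < n}

/-- The shift graph `G(n, 132)` for finite `n`. -/
def FG132 (n : ℕ) : SimpleGraph (FV n) where
  Adj a b := a.val.2 = b.val.1 ∨ b.val.2 = a.val.1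
  symm := ⟨fun a b h => Or.symm h⟩
  loopless := ⟨fun a h => by rcases h with h | h <;> exact a.prop.1.ne' h⟩

/-!
Automorphisms preserve degrees, and `(x, y)` has degree `x + (n - 1 - y)`, so the vertices
`(i, i + 1)` of maximal degree, which form a path, are permuted as a path automorphism: trivially
or by reversal. After composing with the reversal `(x, y) ↦ (n - 1 - y, n - 1 - x)` if needed,
the path is fixed pointwise. A vertex `(x, y)` is then pinned down by the path vertices
`(x - 1, x)`, `(y, y + 1)` adjacent to it, except for the pairs `(0, y)`, `(y + 1, n - 1)`, which
the vertex `(y, y + 2)` tells apart.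
-/

open SimpleGraph Function

theorem Fin.eq_id_of_injective_of_adj {m : ℕ} {σ : Fin m → Fin m} (hinj : Injective σ)
    (hadj : ∀ i j : Fin m, i.val + 1 = j → (σ i).val + 1 = σ j ∨ (σ j).val + 1 = σ i)
    (hstart : ∀ h : 1 < m, (σ ⟨0, by omega⟩).val + 1 = σ ⟨1, h⟩) : σ = id := by
  have step : ∀ k (hk : k + 1 < m), (σ ⟨k, by omega⟩).val + 1 = σ ⟨k + 1, hk⟩ := by
    intro k
    induction k with
    | zero => exact hstart
    | succ k ih =>
      intro hk
      refine (hadj ⟨k + 1, by omega⟩ ⟨k + 2, hk⟩ rfl).resolve_right fun h => ?_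
      have := ih (by omega)
      have := hinj (Fin.ext (by omega) : σ ⟨k + 2, hk⟩ = σ ⟨k, by omega⟩)
      simp at this
  have shift : ∀ k (hk : k < m), (σ ⟨k, hk⟩).val = σ ⟨0, by omega⟩ + k := by
    intro k
    induction k with
    | zero => exact fun _ => rfl
    | succ k ih => exact fun hk => by rw [← step k hk, ih (by omega), Nat.add_assoc]
  -- `σ` is the shift `k ↦ σ 0 + k`, and only the zero shift maps `Fin m` into itself.
  funext i
  obtain ⟨k, hk⟩ := i
  have := shift k hk
  have := shift (m - 1) (by omega)
  have := (σ ⟨m - 1, by omega⟩).isLt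
  exact Fin.ext (show (σ ⟨k, hk⟩).val = k by omega)

theorem Fin.eq_id_or_eq_rev_of_injective_of_adj {m : ℕ} {σ : Fin m → Fin m}
    (hinj : Injective σ)
    (hadj : ∀ i j : Fin m, i.val + 1 = j → (σ i).val + 1 = σ j ∨ (σ j).val + 1 = σ i) :
    σ = id ∨ σ = Fin.rev := by
  by_cases hm : m < 2
  · exact .inl (funext fun i => Fin.ext (by have := (σ i).isLt; omega))
  rcases hadj ⟨0, by omega⟩ ⟨1, by omega⟩ rfl with h01 | h10
  · exact .inl (Fin.eq_id_of_injective_of_adj hinj hadj fun _ => h01)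
  · have hrev : Fin.rev ∘ σ = id := by
      refine Fin.eq_id_of_injective_of_adj (Fin.rev_injective.comp hinj) (fun i j hij => ?_)
        fun _ => ?_
      · simp only [comp_apply, Fin.val_rev]
        have := (σ i).isLt; have := (σ j).isLt
        rcases hadj i j hij with h | h <;> omega
      · simp only [comp_apply, Fin.val_rev]
        have := (σ ⟨0, by omega⟩).isLt
        omega
    exact .inr (funext fun i => by simpa using congrFun (congrArg (Fin.rev ∘ ·) hrev) i)

namespace FG132

variable {n : ℕ}

theorem adj_iff {u v : FV n} : (FG132 n).Adj u v ↔ u.1.2 = v.1.1 ∨ v.1.2 = u.1.1 := Iff.rfl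

instance : Finite (FV n) :=
  ((Set.finite_Iio n).prod (Set.finite_Iio n) |>.subset
    fun _ hp => ⟨hp.1.trans hp.2, hp.2⟩).to_subtype

noncomputable instance (v : FV n) : Fintype ((FG132 n).neighborSet v) := Fintype.ofFinite _

/-- The neighbours of `(x, y)` are the `(w, x)` and the `(y, z)`; recording the free end `w` or `z`
matches them with `{w < x} ∪ {y < z < n}`. -/
theorem degree_eq (v : FV n) : (FG132 n).degree v = v.1.1 + (n - 1 - v.1.2) := by
  obtain ⟨⟨x, y⟩, hxy, hyn⟩ := v
  have hcard : (Finset.range x ∪ Finset.Ioo y n).card = x + (n - 1 - y) := by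
    rw [Finset.card_union_of_disjoint (Finset.disjoint_left.2 fun k hk hk' => by
      simp only [Finset.mem_range, Finset.mem_Ioo] at hk hk'; omega), Finset.card_range,
      Nat.card_Ioo]
    omega
  rw [← card_neighborFinset_eq_degree, ← hcard]
  refine Finset.card_nbij (fun u => if u.1.2 = x then u.1.1 else u.1.2) ?_ ?_ ?_
  · rintro ⟨⟨a, b⟩, hab, hbn⟩ hu
    simp only [Finset.mem_coe, mem_neighborFinset, adj_iff, Finset.mem_union, Finset.mem_range,
      Finset.mem_Ioo] at hu ⊢
    split_ifs <;> omega
  · rintro ⟨⟨a, b⟩, hab, hbn⟩ hu ⟨⟨c, d⟩, hcd, hdn⟩ hu' h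
    simp only [Finset.mem_coe, mem_neighborFinset, adj_iff] at hu hu' h
    simp only [Subtype.mk.injEq, Prod.mk.injEq]
    split_ifs at h <;> omega
  · intro k hk
    simp only [Finset.coe_union, Finset.coe_range, Finset.coe_Ioo, Set.mem_union, Set.mem_Iio,
      Set.mem_Ioo] at hk
    rcases hk with hk | hk
    · exact ⟨⟨(k, x), hk, hxy.trans hyn⟩, by simp [adj_iff], by simp⟩
    · exact ⟨⟨(y, k), hk⟩, by simp [adj_iff], by simp; omega⟩

def rev (v : FV n) : FV n := ⟨(n - 1 - v.1.2, n - 1 - v.1.1), by have := v.2; omega⟩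

theorem rev_involutive : Involutive (rev : FV n → FV n) := fun v => by
  have := v.2
  ext <;> simp only [rev] <;> omega

def reverse (n : ℕ) : FG132 n ≃g FG132 n where
  toEquiv := rev_involutive.toPerm _
  map_rel_iff' {u v} := by
    have := u.2; have := v.2
    simp only [Involutive.coe_toPerm, adj_iff, rev]
    omega

theorem reverse_apply (v : FV n) : reverse n v = rev v := rfl

def pathVertex (i : Fin (n - 1)) : FV n := ⟨(i, i + 1), Nat.lt_succ_self _, by omega⟩

theorem pathVertex_injective : Injective (pathVertex : Fin (n - 1) → FV n) :=
  fun _ _ h => Fin.ext (congrArg (·.1.1) h)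

theorem pathVertex_adj_iff {i : Fin (n - 1)} {v : FV n} :
    (FG132 n).Adj (pathVertex i) v ↔ i.val + 1 = v.1.1 ∨ v.1.2 = i := Iff.rfl

theorem pathVertex_adj_pathVertex_iff {i j : Fin (n - 1)} :
    (FG132 n).Adj (pathVertex i) (pathVertex j) ↔ i.val + 1 = j ∨ j.val + 1 = i := Iff.rfl

theorem reverse_pathVertex (i : Fin (n - 1)) : reverse n (pathVertex i) = pathVertex i.rev := by
  ext <;> simp only [reverse_apply, rev, pathVertex, Fin.val_rev]; omega

/-- The vertices `(i, i + 1)` are exactly those of degree `n - 2`. -/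
theorem exists_apply_pathVertex_eq (f : FG132 n ≃g FG132 n) (i : Fin (n - 1)) :
    ∃ j, f (pathVertex i) = pathVertex j := by
  have hdeg := f.degree_eq (pathVertex i)
  rw [degree_eq, degree_eq] at hdeg
  change _ = i.val + (n - 1 - (i.val + 1)) at hdeg
  have hw := (f (pathVertex i)).2
  exact ⟨⟨(f (pathVertex i)).1.1, by omega⟩,
    Subtype.ext (Prod.ext rfl (show _ = (f (pathVertex i)).1.1 + 1 by omega))⟩

/-- `(x, y)` is adjacent to exactly those of `(x - 1, x)` and `(y, y + 1)` that exist. -/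
theorem eq_or_of_forall_pathVertex_adj_iff {v w : FV n}
    (h : ∀ i, (FG132 n).Adj (pathVertex i) v ↔ (FG132 n).Adj (pathVertex i) w) :
    w = v ∨ (v.1.1 = 0 ∧ w.1 = (v.1.2 + 1, n - 1)) ∨ (w.1.1 = 0 ∧ v.1 = (w.1.2 + 1, n - 1)) := by
  obtain ⟨⟨x, y⟩, hxy, hyn⟩ := v
  obtain ⟨⟨a, b⟩, hab, hbn⟩ := w
  have H : ∀ i, i + 1 < n → ((i + 1 = x ∨ y = i) ↔ (i + 1 = a ∨ b = i)) :=
    fun i hi => h ⟨i, by omega⟩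
  have := H (x - 1); have := H y; have := H (a - 1); have := H b
  simp only [Subtype.mk.injEq, Prod.mk.injEq]
  omega

section FixingPath

variable {g : FG132 n ≃g FG132 n} (hg : ∀ i, g (pathVertex i) = pathVertex i)
include hg

theorem pathVertex_adj_apply_iff (i : Fin (n - 1)) (v : FV n) :
    (FG132 n).Adj (pathVertex i) (g v) ↔ (FG132 n).Adj (pathVertex i) v := by
  have := g.map_adj_iff (v := pathVertex i) (w := v)
  rwa [hg] at this

theorem apply_eq_self_of_pos_of_lt {v : FV n} (h0 : 0 < v.1.1) (hlt : v.1.2 + 1 < n) : g v = v := by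
  rcases eq_or_of_forall_pathVertex_adj_iff (fun i => (pathVertex_adj_apply_iff hg i v).symm)
    with h | ⟨h, -⟩ | ⟨-, h⟩
  · exact h
  · omega
  · simp only [Prod.ext_iff] at h; omega

/-- If `(0, y)` went to `(y + 1, n - 1)`, then the fixed vertex `(y, y + 2)`, adjacent to the
former but not the latter, or for `y = n - 3` the fixed vertex `(n - 2, n - 1)` itself, is in
the way. -/
theorem apply_ne_of_fst_eq_zero {v : FV n} (hv : v.1.1 = 0) : (g v).1 ≠ (v.1.2 + 1, n - 1) := by
  intro hgv
  have hv2 := v.2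
  have hw := (g v).2
  rw [hgv] at hw
  dsimp only at hw
  by_cases hy : v.1.2 + 3 < n
  · let u : FV n := ⟨(v.1.2, v.1.2 + 2), by omega, by omega⟩
    have hu : g u = u := apply_eq_self_of_pos_of_lt hg (by dsimp [u]; omega) (by dsimp [u]; omega)
    have hadj : (FG132 n).Adj v u := by rw [adj_iff]; left; rfl
    rw [← g.map_adj_iff, hu, adj_iff, hgv] at hadj
    dsimp [u] at hadj
    omega
  · have hlast : g v = pathVertex ⟨n - 2, by omega⟩ :=
      Subtype.ext (hgv.trans (Prod.ext (by simp [pathVertex]; omega) (by simp [pathVertex]; omega)))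
    have := congrArg (·.1.1) (g.injective (hlast.trans (hg _).symm))
    simp [pathVertex] at this
    omega

theorem apply_eq_self_of_forall_pathVertex (v : FV n) : g v = v := by
  have hg' : ∀ i, g.symm (pathVertex i) = pathVertex i := fun i => g.symm_apply_eq.2 (hg i).symm
  rcases eq_or_of_forall_pathVertex_adj_iff (fun i => (pathVertex_adj_apply_iff hg i v).symm)
    with h | ⟨h0, h⟩ | ⟨h0, h⟩
  · exact h
  · exact absurd h (apply_ne_of_fst_eq_zero hg h0)
  · exact absurd (by rwa [g.symm_apply_apply]) (apply_ne_of_fst_eq_zero hg' h0)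

end FixingPath

end FG132

open FG132

/-- For finite `n ≥ 3` the automorphism group of `G(n,132)` is `ℤ/2ℤ`, generated by the
order-reversal map `(x,y) ↦ (n-1-y, n-1-x)`: that map is a nontrivial automorphism `r`,
and every automorphism equals the identity or `r`. -/
theorem stmt_14 (n : ℕ) (hn : 3 ≤ n) :
    ∃ r : FG132 n ≃g FG132 n,
      (∀ v : FV n, ((r v).val.1 = n - 1 - v.val.2 ∧ (r v).val.2 = n - 1 - v.val.1)) ∧
      ¬ (∀ v, r v = v) ∧
      ∀ f : FG132 n ≃g FG132 n, (∀ v, f v = v) ∨ (∀ v, f v = r v) := by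
  refine ⟨reverse n, fun v => ⟨rfl, rfl⟩, fun h => ?_, fun f => ?_⟩
  · have := congrArg (·.1.1) (h (pathVertex ⟨0, by omega⟩))
    simp [reverse_apply, rev, pathVertex] at this
    omega
  choose σ hσ using exists_apply_pathVertex_eq f
  have hinj : Injective σ := fun i j hij =>
    pathVertex_injective (f.injective (by rw [hσ, hσ, hij]))
  have hadj : ∀ i j : Fin (n - 1), i.val + 1 = j → (σ i).val + 1 = σ j ∨ (σ j).val + 1 = σ i :=
    fun i j hij => by
      rw [← pathVertex_adj_pathVertex_iff, ← hσ, ← hσ, f.map_adj_iff, pathVertex_adj_pathVertex_iff]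
      exact .inl hij
  rcases Fin.eq_id_or_eq_rev_of_injective_of_adj hinj hadj with rfl | rfl
  · exact .inl (apply_eq_self_of_forall_pathVertex hσ)
  · refine .inr fun v => ?_
    have hfix := apply_eq_self_of_forall_pathVertex (g := f.trans (reverse n))
      (fun i => by rw [RelIso.trans_apply, hσ, reverse_pathVertex, Fin.rev_rev]) v
    rw [RelIso.trans_apply, reverse_apply] at hfix
    exact (rev_involutive (f v)).symm.trans (congrArg rev hfix)
end

section
/- For every strong limit cardinal κ, the chromatic number of G(κ,132) equals κ. -/
/-!
Colouring `(x, y)` by `x` is proper, so the chromatic number is at most `κ`. Conversely, given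
a proper colouring with colour set `β`, assign to each `y` the set of colours of the edges
`(x, y)` ending in it. For `y < y'` the colour of `(y, y')` lies in the set of `y'` but not in
that of `y`, since `(x, y)` and `(y, y')` are adjacent; hence `κ ≤ 2 ^ #β`, which for a strong
limit `κ` forces `κ ≤ #β`.
-/

open Cardinal

/-- The shift graph `G(S, 132)` on a linear order `S`. -/
def S132 (S : Type*) [LinearOrder S] : SimpleGraph {p : S × S // p.1 < p.2} where
  Adj a b := a.val.2 = b.val.1 ∨ b.val.2 = a.val.1
  symm := ⟨fun a b h => Or.symm h⟩
  loopless := ⟨fun a h => by rcases h with h | h <;> exact a.prop.ne' h⟩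

/-- The chromatic number of a graph, as a cardinal: the least cardinality of a colour
set admitting a proper vertex colouring. -/
noncomputable def chromNum {V : Type} (G : SimpleGraph V) : Cardinal :=
  sInf { c | ∃ (β : Type) (f : V → β), (∀ a b, G.Adj a b → f a ≠ f b) ∧ Cardinal.mk β = c }

section chromNum

variable {V : Type} {G : SimpleGraph V}

lemma chromNum_le_mk {β : Type} (f : V → β) (hf : ∀ a b, G.Adj a b → f a ≠ f b) :
    chromNum G ≤ #β :=
  csInf_le' ⟨β, f, hf, rfl⟩

lemma le_chromNum {c : Cardinal}
    (h : ∀ (β : Type) (f : V → β), (∀ a b, G.Adj a b → f a ≠ f b) → c ≤ #β) :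
    c ≤ chromNum G :=
  le_csInf ⟨#V, V, id, fun _ _ => G.ne_of_adj, rfl⟩ fun _ ⟨β, f, hf, hc⟩ => hc ▸ h β f hf

end chromNum

universe u

namespace S132

variable {S : Type u} [LinearOrder S]

lemma fst_ne_fst_of_adj {a b : {p : S × S // p.1 < p.2}} (h : (S132 S).Adj a b) :
    a.val.1 ≠ b.val.1 := by
  rcases h with h | h
  · exact (a.prop.trans_eq h).ne
  · exact (b.prop.trans_eq h).ne'

def inColours {β : Type*} (f : {p : S × S // p.1 < p.2} → β) (y : S) : Set β :=
  Set.range fun x : Set.Iio y => f ⟨(x, y), x.2⟩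

lemma inColours_injective {β : Type*} {f : {p : S × S // p.1 < p.2} → β}
    (hf : ∀ a b, (S132 S).Adj a b → f a ≠ f b) : Function.Injective (inColours f) := by
  refine Function.Injective.of_lt_imp_ne fun y y' hyy' hsets => ?_
  have hmem : f ⟨(y, y'), hyy'⟩ ∈ inColours f y := hsets ▸ ⟨⟨y, hyy'⟩, rfl⟩
  obtain ⟨⟨x, hxy⟩, hfx⟩ := hmem
  exact hf ⟨(x, y), hxy⟩ ⟨(y, y'), hyy'⟩ (Or.inl rfl) hfx

lemma mk_le_two_power {β : Type u} {f : {p : S × S // p.1 < p.2} → β}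
    (hf : ∀ a b, (S132 S).Adj a b → f a ≠ f b) : #S ≤ 2 ^ #β := by
  simpa only [mk_set] using mk_le_of_injective (inColours_injective hf)

end S132

/-- For every strong limit cardinal `κ`, the chromatic number of `G(κ,132)` is `κ`. -/
theorem stmt_17 (κ : Cardinal.{0}) (hκ : κ.IsStrongLimit) :
    chromNum (S132 κ.ord.ToType) = κ := by
  refine le_antisymm ?_ (le_chromNum fun β f hf => ?_)
  · simpa only [mk_ord_toType] using
      chromNum_le_mk (G := S132 κ.ord.ToType) _ fun _ _ => S132.fst_ne_fst_of_adj
  · by_contra! hβ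
    have hκβ : κ ≤ 2 ^ #β := mk_ord_toType κ ▸ S132.mk_le_two_power hf
    exact (hκ.isStrongPrelimit hβ).not_ge hκβ
end
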